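/- In the braid group Br_{n+1}, the element (s_1 s_2 ··· s_n)(s_n ··· s_2 s_1) commutes with ℓ_{i,j} for any interval [i,j] with 2 ≤ i ≤ j ≤ n (i.e., any connected subgraph of A_n not containing the first vertex 1). -/

import Mathlib

namespace BraidPaper

/-- The braid relations on `n` generators `s_1, ..., s_n` (indexed by `Fin n`):
far-away commutativity and the braid relation for adjacent generators.  The
corresponding presented group is the Artin braid group `Br_{n+1}`. -/
def braidRelsSet (n : ℕ) : Set (FreeGroup (Fin n)) :=
  {r | (∃ i j : Fin n, (i : ℕ) + 2 ≤ (j : ℕ) ∧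
        r = FreeGroup.of i * FreeGroup.of j * (FreeGroup.of i)⁻¹ * (FreeGroup.of j)⁻¹) ∨
       (∃ i j : Fin n, (i : ℕ) + 1 = (j : ℕ) ∧
        r = FreeGroup.of i * FreeGroup.of j * FreeGroup.of i *
            (FreeGroup.of j)⁻¹ * (FreeGroup.of i)⁻¹ * (FreeGroup.of j)⁻¹)}

/-- The Artin braid group `Br_{n+1}` on generators `s_1, ..., s_n`. -/
abbrev BraidGroup (n : ℕ) := PresentedGroup (braidRelsSet n)

/-- The generator `s_i` of `Br_{n+1}`, for `1 ≤ i ≤ n` (junk value `1` otherwise). -/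
def gen (n : ℕ) (i : ℕ) : BraidGroup n :=
  if h : 1 ≤ i ∧ i ≤ n then PresentedGroup.of (⟨i - 1, by omega⟩ : Fin n) else 1

/-- The descending product `s_j s_{j-1} ⋯ s_i` (equal to `1` if `j < i`). -/
def desc (n j i : ℕ) : BraidGroup n :=
  (((List.range' i (j + 1 - i)).reverse).map (gen n)).prod

/-- The ascending product `s_i s_{i+1} ⋯ s_j` (equal to `1` if `j < i`). -/
def asc (n i j : ℕ) : BraidGroup n :=
  ((List.range' i (j + 1 - i)).map (gen n)).prod

/-- The standard lift `ℓ_{i,j} = (s_i)(s_{i+1}s_i)⋯(s_j⋯s_i)` of the longest element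
over the interval `[i,j]`, with the convention `ℓ_{i,j} = 1` when `j < i`. -/
def ell (n i j : ℕ) : BraidGroup n :=
  ((List.range' i (j + 1 - i)).map (fun k => desc n k i)).prod

lemma rel_one {n : ℕ} {r : FreeGroup (Fin n)} (h : r ∈ braidRelsSet n) :
    PresentedGroup.mk (braidRelsSet n) r = 1 :=
  (QuotientGroup.eq_one_iff r).mpr (Subgroup.subset_normalClosure h)

lemma of_comm {n : ℕ} (i j : Fin n) (h : (i : ℕ) + 2 ≤ (j : ℕ)) :
    Commute (PresentedGroup.of (rels := braidRelsSet n) i) (PresentedGroup.of j) := by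
  have h1 := rel_one (n := n) (Or.inl ⟨i, j, h, rfl⟩)
  simp only [map_mul, map_inv] at h1
  have h2 : PresentedGroup.of (rels := braidRelsSet n) i * PresentedGroup.of j *
      (PresentedGroup.of i)⁻¹ * (PresentedGroup.of j)⁻¹ = 1 := h1
  rw [mul_inv_eq_one, mul_inv_eq_iff_eq_mul] at h2
  exact h2

lemma of_braid {n : ℕ} (i j : Fin n) (h : (i : ℕ) + 1 = (j : ℕ)) :
    PresentedGroup.of (rels := braidRelsSet n) i * PresentedGroup.of j * PresentedGroup.of i
      = PresentedGroup.of j * PresentedGroup.of i * PresentedGroup.of j := by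
  have h1 := rel_one (n := n) (Or.inr ⟨i, j, h, rfl⟩)
  simp only [map_mul, map_inv] at h1
  have h2 : PresentedGroup.of (rels := braidRelsSet n) i * PresentedGroup.of j *
      PresentedGroup.of i * (PresentedGroup.of j)⁻¹ * (PresentedGroup.of i)⁻¹ *
      (PresentedGroup.of j)⁻¹ = 1 := h1
  rw [mul_inv_eq_one, mul_inv_eq_iff_eq_mul, mul_inv_eq_iff_eq_mul] at h2
  exact h2

lemma gen_comm {n a b : ℕ} (h : a + 2 ≤ b) : Commute (gen n a) (gen n b) := by
  unfold gen
  split_ifs with h1 h2 h2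
  · exact of_comm _ _ (by show a - 1 + 2 ≤ b - 1; omega)
  · exact Commute.one_right _
  · exact Commute.one_left _
  · exact Commute.one_left _

lemma gen_braid {n a : ℕ} (h1 : 1 ≤ a) (h2 : a + 1 ≤ n) :
    gen n a * gen n (a + 1) * gen n a = gen n (a + 1) * gen n a * gen n (a + 1) := by
  unfold gen
  rw [dif_pos ⟨h1, by omega⟩, dif_pos (⟨by omega, h2⟩ : 1 ≤ a + 1 ∧ a + 1 ≤ n)]
  exact of_braid _ _ (by show a - 1 + 1 = a + 1 - 1; omega)

lemma range'_split {a b c : ℕ} (h1 : a ≤ c + 1) (h2 : c ≤ b) :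
    List.range' a (b + 1 - a) = List.range' a (c + 1 - a) ++ List.range' (c + 1) (b + 1 - (c + 1)) := by
  have h := List.range'_append_1 (s := a) (m := c + 1 - a) (n := b + 1 - (c + 1))
  rw [show a + (c + 1 - a) = c + 1 from by omega] at h
  rw [h, show c + 1 - a + (b + 1 - (c + 1)) = b + 1 - a from by omega]

lemma asc_split {n a b c : ℕ} (h1 : a ≤ c + 1) (h2 : c ≤ b) :
    asc n a b = asc n a c * asc n (c + 1) b := by
  unfold asc
  rw [range'_split h1 h2, List.map_append, List.prod_append]

lemma desc_split {n a b c : ℕ} (h1 : a ≤ c + 1) (h2 : c ≤ b) :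
    desc n b a = desc n b (c + 1) * desc n c a := by
  unfold desc
  rw [range'_split h1 h2, List.reverse_append, List.map_append, List.prod_append]

lemma asc_self {n a : ℕ} : asc n a a = gen n a := by
  unfold asc
  rw [show a + 1 - a = 1 from by omega]
  simp

lemma desc_self {n a : ℕ} : desc n a a = gen n a := by
  unfold desc
  rw [show a + 1 - a = 1 from by omega]
  simp

lemma commute_asc {n k a b : ℕ} (h : ∀ m, a ≤ m → m ≤ b → Commute (gen n k) (gen n m)) :
    Commute (gen n k) (asc n a b) := by
  unfold asc
  apply Commute.list_prod_right
  intro x hx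
  simp only [List.mem_map, List.mem_range'_1] at hx
  obtain ⟨m, hm, rfl⟩ := hx
  exact h m hm.1 (by omega)

lemma commute_desc {n k a b : ℕ} (h : ∀ m, a ≤ m → m ≤ b → Commute (gen n k) (gen n m)) :
    Commute (gen n k) (desc n b a) := by
  unfold desc
  apply Commute.list_prod_right
  intro x hx
  simp only [List.mem_map, List.mem_reverse, List.mem_range'_1] at hx
  obtain ⟨m, hm, rfl⟩ := hx
  exact h m hm.1 (by omega)

lemma key {G : Type*} [Group G] (p x y z : G) (h1 : Commute x z) (h2 : Commute y p)
    (hb : x * y * x = y * x * y) :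
    (p * (x * (y * z))) * x = y * (p * (x * (y * z))) := by
  have hb' : ∀ w : G, x * (y * (x * w)) = y * (x * (y * w)) := fun w => by
    simp only [← mul_assoc]; rw [hb]
  simp only [mul_assoc]
  rw [h1.symm.eq, hb', ← mul_assoc, ← h2.eq, mul_assoc]

lemma asc_gen {n a k b : ℕ} (ha : 1 ≤ a) (hak : a ≤ k) (hkb : k + 1 ≤ b) (hb : b ≤ n) :
    asc n a b * gen n k = gen n (k + 1) * asc n a b := by
  have e1 : asc n a b = asc n a (k - 1) * asc n k b := by
    have h := asc_split (n := n) (a := a) (b := b) (c := k - 1) (by omega) (by omega)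
    rwa [show k - 1 + 1 = k from by omega] at h
  have e2 : asc n k b = gen n k * (gen n (k + 1) * asc n (k + 2) b) := by
    rw [asc_split (n := n) (a := k) (b := b) (c := k) (by omega) (by omega),
      asc_split (n := n) (a := k + 1) (b := b) (c := k + 1) (by omega) (by omega),
      asc_self, asc_self]
  have c1 : Commute (gen n k) (asc n (k + 2) b) :=
    commute_asc fun m hm _ => gen_comm (by omega)
  have c2 : Commute (gen n (k + 1)) (asc n a (k - 1)) :=
    commute_asc fun m hm hm2 => (gen_comm (a := m) (b := k + 1) (by omega)).symm
  rw [e1, e2]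
  exact key _ _ _ _ c1 c2 (gen_braid (by omega) (by omega))

lemma desc_gen {n a k b : ℕ} (ha : 1 ≤ a) (hak : a + 1 ≤ k) (hkb : k ≤ b) (hb : b ≤ n) :
    desc n b a * gen n k = gen n (k - 1) * desc n b a := by
  have e1 : desc n b a = desc n b (k + 1) * desc n k a :=
    desc_split (n := n) (a := a) (b := b) (c := k) (by omega) (by omega)
  have e2 : desc n k a = gen n k * (gen n (k - 1) * desc n (k - 2) a) := by
    have h := desc_split (n := n) (a := a) (b := k) (c := k - 1) (by omega) (by omega)
    rw [show k - 1 + 1 = k from by omega] at h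
    have h' := desc_split (n := n) (a := a) (b := k - 1) (c := k - 2) (by omega) (by omega)
    rw [show k - 2 + 1 = k - 1 from by omega] at h'
    rw [h, h', desc_self, desc_self]
  have c1 : Commute (gen n k) (desc n (k - 2) a) :=
    commute_desc fun m hm hm2 => (gen_comm (a := m) (b := k) (by omega)).symm
  have c2 : Commute (gen n (k - 1)) (desc n b (k + 1)) :=
    commute_desc fun m hm _ => gen_comm (a := k - 1) (b := m) (by omega)
  have hb' : gen n k * gen n (k - 1) * gen n k = gen n (k - 1) * gen n k * gen n (k - 1) := by
    have h := gen_braid (n := n) (a := k - 1) (by omega) (by omega)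
    rw [show k - 1 + 1 = k from by omega] at h
    exact h.symm
  rw [e1, e2]
  exact key _ _ _ _ c1 c2 hb'

lemma D_comm_gen {n k : ℕ} (h2 : 2 ≤ k) (hn : k ≤ n) :
    Commute (asc n 1 n * desc n n 1) (gen n k) := by
  show _ = _
  calc asc n 1 n * desc n n 1 * gen n k
      = asc n 1 n * (desc n n 1 * gen n k) := mul_assoc _ _ _
    _ = asc n 1 n * (gen n (k - 1) * desc n n 1) := by
        rw [desc_gen le_rfl h2 hn le_rfl]
    _ = (asc n 1 n * gen n (k - 1)) * desc n n 1 := (mul_assoc _ _ _).symm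
    _ = (gen n (k - 1 + 1) * asc n 1 n) * desc n n 1 := by
        rw [asc_gen le_rfl (by omega) (by omega) le_rfl]
    _ = gen n k * (asc n 1 n * desc n n 1) := by
        rw [show k - 1 + 1 = k from by omega, mul_assoc]


/-- `(s_1 ⋯ s_n)(s_n ⋯ s_1)` commutes with `ℓ_{i,j}` whenever `2 ≤ i ≤ j ≤ n`. -/
theorem asc_desc_commute_ell (n i j : ℕ) (hi : 2 ≤ i) (hij : i ≤ j) (hj : j ≤ n) :
    Commute (asc n 1 n * desc n n 1) (ell n i j) := by
  unfold ell
  apply Commute.list_prod_right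
  intro x hx
  simp only [List.mem_map, List.mem_range'_1] at hx
  obtain ⟨m, hm, rfl⟩ := hx
  unfold desc
  apply Commute.list_prod_right
  intro y hy
  simp only [List.mem_map, List.mem_reverse, List.mem_range'_1] at hy
  obtain ⟨k, hk, rfl⟩ := hy
  exact D_comm_gen (by omega) (by omega)
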